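/- Let S be an ensemble that is symmetric with respect to a unitary representation σ of a finite group G (i.e., conjugation by each σ(g) permutes the states, and states in the same orbit have equal prior probabilities). Then for any POVM P, the symmetrized POVM P^G = {(1/|G|) σ(g) Π σ(g)† : g ∈ G, Π ∈ P} satisfies I(S, P^G) = I(S, P). -/

import Mathlib

open scoped ComplexOrder

/-- `H(u) = u·log₂ u`. -/
noncomputable def H (u : ℝ) : ℝ := u * Real.logb 2 u

/-- Mutual information of an ensemble `(p, ρ)` and a POVM `P`. -/
noncomputable def mutualInfo {d m : ℕ} {ι : Type*} [Fintype ι]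
    (p : Fin m → ℝ) (ρ : Fin m → Matrix (Fin d) (Fin d) ℂ)
    (P : ι → Matrix (Fin d) (Fin d) ℂ) : ℝ :=
  (∑ i, ∑ j, H (p i * ((P j * ρ i).trace).re))
    - (∑ i, H (∑ j, p i * ((P j * ρ i).trace).re))
    - (∑ j, H (∑ i, p i * ((P j * ρ i).trace).re))

open scoped Matrix

lemma trace_re_nonneg_of_psd {d : ℕ} {M : Matrix (Fin d) (Fin d) ℂ}
    (hM : M.PosSemidef) : 0 ≤ M.trace.re := by
  exact (Complex.nonneg_iff.mp hM.trace_nonneg).1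

lemma trace_mul_re_nonneg {d : ℕ} {A B : Matrix (Fin d) (Fin d) ℂ}
    (hA : A.PosSemidef) (hB : B.PosSemidef) : 0 ≤ ((A * B).trace).re := by
  open scoped MatrixOrder in
  have h2 : (A * B).trace = (CFC.sqrt A * B * CFC.sqrt A).trace := by
    rw [show A * B = CFC.sqrt A * (CFC.sqrt A * B) by
        rw [← mul_assoc, CFC.sqrt_mul_sqrt_self A hA.nonneg],
      Matrix.trace_mul_comm, mul_assoc]
  open scoped MatrixOrder in
  have h3 : (CFC.sqrt A * B * CFC.sqrt A).PosSemidef := by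
    have := hB.mul_mul_conjTranspose_same (CFC.sqrt A)
    rwa [(Matrix.nonneg_iff_posSemidef.mp (CFC.sqrt_nonneg A)).1.eq] at this
  rw [h2]; exact trace_re_nonneg_of_psd h3

lemma H_inv_smul {N u : ℝ} (hN : 0 < N) (hu : 0 ≤ u) :
    N * H (N⁻¹ * u) = H u - u * Real.logb 2 N := by
  rcases eq_or_lt_of_le hu with h | h
  · simp [H, ← h]
  · unfold H
    rw [Real.logb_mul (by positivity) (ne_of_gt h), Real.logb_inv]
    field_simp
    ring


/-- Lemma 12: for a symmetric ensemble the symmetrized POVM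
`P^G = {(1/|G|) σ(g) Π σ(g)† : g ∈ G, Π ∈ P}` has the same mutual information
as `P`. -/
theorem stmt14 (d m n : ℕ) (G : Type*) [Group G] [Fintype G]
    (σ : G →* Matrix.unitaryGroup (Fin d) ℂ)
    (p : Fin m → ℝ) (hp : ∀ i, 0 ≤ p i) (hp1 : ∑ i, p i = 1)
    (ρ : Fin m → Matrix (Fin d) (Fin d) ℂ)
    (hρ : ∀ i, (ρ i).PosSemidef ∧ (ρ i).trace = 1)
    (hsym : ∀ g : G, ∃ π : Equiv.Perm (Fin m), ∀ i,
      (σ g : Matrix (Fin d) (Fin d) ℂ) * ρ i * (σ g : Matrix (Fin d) (Fin d) ℂ)ᴴ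
          = ρ (π i)
        ∧ p (π i) = p i)
    (P : Fin n → Matrix (Fin d) (Fin d) ℂ)
    (hP : ∀ j, (P j).PosSemidef) (hPsum : ∑ j, P j = 1) :
    mutualInfo p ρ (fun gj : G × Fin n =>
        ((Fintype.card G : ℝ)⁻¹) •
          ((σ gj.1 : Matrix (Fin d) (Fin d) ℂ) * P gj.2
            * (σ gj.1 : Matrix (Fin d) (Fin d) ℂ)ᴴ))
      = mutualInfo p ρ P := by
  classical
  set N : ℝ := (Fintype.card G : ℝ) with hNdef
  have hN : 0 < N := by
    rw [hNdef]
    exact_mod_cast Fintype.card_pos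
  set q : Fin m → Fin n → ℝ := fun i j => p i * ((P j * ρ i).trace).re with hqdef
  have hq0 : ∀ i j, 0 ≤ q i j := fun i j =>
    mul_nonneg (hp i) (trace_mul_re_nonneg (hP j) (hρ i).1)
  have hqrow : ∀ i, ∑ j, q i j = p i := by
    intro i
    have h1 : ∑ j, (P j * ρ i).trace = 1 := by
      rw [← Matrix.trace_sum, ← Finset.sum_mul, hPsum, one_mul, (hρ i).2]
    calc ∑ j, q i j = p i * (∑ j, (P j * ρ i).trace).re := by
          rw [Complex.re_sum, Finset.mul_sum]
      _ = p i := by rw [h1]; simp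
  set r : Fin n → ℝ := fun j => ∑ i, q i j with hrdef
  have hr0 : ∀ j, 0 ≤ r j := fun j => Finset.sum_nonneg fun i _ => hq0 i j
  have hrtot : ∑ j, r j = 1 := by
    rw [hrdef]
    rw [Finset.sum_comm]
    simp only [hqrow]
    exact hp1
  have hqtot : ∑ j, ∑ i, q i j = 1 := hrtot
  -- the symmetrized POVM
  set F : G × Fin n → Matrix (Fin d) (Fin d) ℂ := fun gj =>
    ((Fintype.card G : ℝ)⁻¹) •
      ((σ gj.1 : Matrix (Fin d) (Fin d) ℂ) * P gj.2
        * (σ gj.1 : Matrix (Fin d) (Fin d) ℂ)ᴴ) with hFdef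
  set a : Fin m → G × Fin n → ℝ := fun i gj => p i * ((F gj * ρ i).trace).re with hadef
  -- choose permutations
  set π : G → Equiv.Perm (Fin m) := fun g => (hsym g).choose with hπdef
  have hπ : ∀ g i, (σ g : Matrix (Fin d) (Fin d) ℂ) * ρ i *
      (σ g : Matrix (Fin d) (Fin d) ℂ)ᴴ = ρ (π g i) ∧ p (π g i) = p i :=
    fun g => (hsym g).choose_spec
  have hU : ∀ g : G, (σ g : Matrix (Fin d) (Fin d) ℂ)ᴴ *
      (σ g : Matrix (Fin d) (Fin d) ℂ) = 1 := by
    intro g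
    have := Matrix.UnitaryGroup.star_mul_self (σ g)
    rwa [Matrix.star_eq_conjTranspose] at this
  have key : ∀ (g : G) (i : Fin m) (j : Fin n),
      a (π g i) (g, j) = N⁻¹ * q i j := by
    intro g i j
    set U : Matrix (Fin d) (Fin d) ℂ := (σ g : Matrix (Fin d) (Fin d) ℂ) with hUdef
    have h1 : U * ρ i * Uᴴ = ρ (π g i) := (hπ g i).1
    have hmul : U * P j * Uᴴ * ρ (π g i) = U * (P j * ρ i) * Uᴴ := by
      rw [← h1]
      have e : Uᴴ * (U * (ρ i * Uᴴ)) = ρ i * Uᴴ := by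
        rw [← mul_assoc, hU g, one_mul]
      simp only [mul_assoc]
      rw [e]
    have htr : (U * (P j * ρ i) * Uᴴ).trace = (P j * ρ i).trace := by
      rw [Matrix.trace_mul_cycle, hU g, one_mul]
    have : (F (g, j) * ρ (π g i)).trace = (N⁻¹ : ℝ) • (P j * ρ i).trace := by
      rw [hFdef]
      simp only [Matrix.smul_mul, Matrix.trace_smul]
      rw [← hUdef, hmul, htr]
    rw [hadef]
    simp only [this, (hπ g i).2, Complex.real_smul]
    rw [hqdef]
    simp [Complex.mul_re]
    ring
  -- term computations
  have cardsmul : ∀ x : ℝ, (Finset.univ : Finset G).card • x = N * x := by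
    intro x; rw [Finset.card_univ, nsmul_eq_mul, hNdef]
  have T1 : ∑ i, ∑ gj : G × Fin n, H (a i gj)
      = (∑ i, ∑ j, H (q i j)) - Real.logb 2 N := by
    rw [Finset.sum_comm]
    rw [Fintype.sum_prod_type]
    have step : ∀ g j, ∑ i, H (a i (g, j)) = ∑ i, H (N⁻¹ * q i j) := by
      intro g j
      rw [← Equiv.sum_comp (π g) (fun i => H (a i (g, j)))]
      exact Finset.sum_congr rfl fun i _ => by rw [key g i j]
    simp only [step]
    rw [Finset.sum_const, cardsmul, Finset.mul_sum]
    have : ∀ j : Fin n, N * ∑ i, H (N⁻¹ * q i j)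
        = ∑ i, (H (q i j) - q i j * Real.logb 2 N) := by
      intro j
      rw [Finset.mul_sum]
      exact Finset.sum_congr rfl fun i _ => H_inv_smul hN (hq0 i j)
    simp only [this, Finset.sum_sub_distrib, ← Finset.sum_mul]
    rw [hqtot, one_mul, Finset.sum_comm]
  have T2 : ∑ i, H (∑ gj : G × Fin n, a i gj) = ∑ i, H (p i) := by
    refine Finset.sum_congr rfl fun i _ => ?_
    congr 1
    rw [Fintype.sum_prod_type]
    have step : ∀ g : G, ∑ j, a i (g, j) = N⁻¹ * p i := by
      intro g
      have hi : i = π g ((π g)⁻¹ i) := ((π g).apply_symm_apply i).symm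
      have hpk : p ((π g)⁻¹ i) = p i := by
        conv_rhs => rw [hi]
        exact ((hπ g ((π g)⁻¹ i)).2).symm ▸ rfl
      calc ∑ j, a i (g, j) = ∑ j, N⁻¹ * q ((π g)⁻¹ i) j := by
            refine Finset.sum_congr rfl fun j _ => ?_
            conv_lhs => rw [hi]
            exact key g ((π g)⁻¹ i) j
        _ = N⁻¹ * p i := by rw [← Finset.mul_sum, hqrow, hpk]
    simp only [step]
    rw [Finset.sum_const, cardsmul]
    field_simp
  have T3 : ∑ gj : G × Fin n, H (∑ i, a i gj)
      = (∑ j, H (r j)) - Real.logb 2 N := by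
    rw [Fintype.sum_prod_type]
    have step : ∀ g j, ∑ i, a i (g, j) = N⁻¹ * r j := by
      intro g j
      rw [← Equiv.sum_comp (π g) (fun i => a i (g, j))]
      rw [Finset.sum_congr rfl fun i _ => key g i j, ← Finset.mul_sum, hrdef]
    simp only [step]
    rw [Finset.sum_const, cardsmul, Finset.mul_sum]
    have : ∀ j : Fin n, N * H (N⁻¹ * r j) = H (r j) - r j * Real.logb 2 N :=
      fun j => H_inv_smul hN (hr0 j)
    simp only [this, Finset.sum_sub_distrib, ← Finset.sum_mul, hrtot, one_mul]
  -- assemble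
  show (∑ i, ∑ gj : G × Fin n, H (a i gj)) - (∑ i, H (∑ gj : G × Fin n, a i gj))
      - (∑ gj : G × Fin n, H (∑ i, a i gj)) = mutualInfo p ρ P
  rw [T1, T2, T3]
  have hrhs : mutualInfo p ρ P
      = (∑ i, ∑ j, H (q i j)) - (∑ i, H (p i)) - (∑ j, H (r j)) := by
    unfold mutualInfo
    rw [hqdef, hrdef]
    simp only [hqrow]
    have hq' : ∀ i, ∑ j, p i * ((P j * ρ i).trace).re = p i := hqrow
    simp only [hq']
    rfl
  rw [hrhs]
  ring
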